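/- For all integers t ≥ 2 and k ≥ 1, δ_{t,2}(ℤ²) ≥ δ_{t+k, 2+2k}(ℤ²). -/
import Mathlib


open scoped ENNReal

/-- ℓ1 (taxicab) distance on the grid ℤ². -/
def gridDist (u v : ℤ × ℤ) : ℕ := (u.1 - v.1).natAbs + (u.2 - v.2).natAbs

/-- Total signal received at `v` from a set of towers `T`, each transmitting strength `t`
(a tower at distance `d` contributes `max (t - d) 0`). -/
noncomputable def signal (t : ℕ) (T : Set (ℤ × ℤ)) (v : ℤ × ℤ) : ℝ≥0∞ :=
  ∑' w : T, ((t - gridDist w v : ℕ) : ℝ≥0∞)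

/-- `T ⊆ ℤ²` is `(t,r)`-broadcasting if every vertex receives total signal at least `r`. -/
def IsBroadcasting (t r : ℕ) (T : Set (ℤ × ℤ)) : Prop :=
  ∀ v : ℤ × ℤ, (r : ℝ≥0∞) ≤ signal t T v

/-- Density of a subset of ℤ²: `limsup_{n→∞} |T ∩ [-n,n]²| / (2n+1)²`. -/
noncomputable def density (T : Set (ℤ × ℤ)) : ℝ≥0∞ :=
  Filter.atTop.limsup fun n : ℕ =>
    (T ∩ {v : ℤ × ℤ | v.1.natAbs ≤ n ∧ v.2.natAbs ≤ n}).encard / (((2 * n + 1) ^ 2 : ℕ) : ℝ≥0∞)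

/-- `δ_{t,r}(ℤ²)`: the infimum of the densities of `(t,r)`-broadcasting subsets of ℤ². -/
noncomputable def deltaGrid (t r : ℕ) : ℝ≥0∞ :=
  ⨅ (T : Set (ℤ × ℤ)) (_ : IsBroadcasting t r T), density T

lemma gridDist_triangle (u v w : ℤ × ℤ) : gridDist u w ≤ gridDist u v + gridDist v w := by
  unfold gridDist; omega

lemma pair_le_tsum {ι : Type*} (f : ι → ℝ≥0∞) {i j : ι} (hij : i ≠ j) :
    f i + f j ≤ ∑' x, f x := by
  classical
  have h := ENNReal.sum_le_tsum (f := f) ({i, j} : Finset ι)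
  rwa [Finset.sum_pair hij] at h

lemma two_le_tsum_cases {ι : Type*} (f : ι → ℕ)
    (h : (2 : ℝ≥0∞) ≤ ∑' i, (f i : ℝ≥0∞)) :
    (∃ i, 2 ≤ f i) ∨ ∃ i j, i ≠ j ∧ 1 ≤ f i ∧ 1 ≤ f j := by
  by_cases h1 : ∃ i, 2 ≤ f i
  · exact Or.inl h1
  push_neg at h1
  have hex : ∃ i, 1 ≤ f i := by
    by_contra hc
    push_neg at hc
    have hz : ∑' i, (f i : ℝ≥0∞) = 0 := by
      rw [ENNReal.tsum_eq_zero]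
      intro i
      have := hc i
      simp [Nat.lt_one_iff.mp this]
    rw [hz] at h
    simp at h
  obtain ⟨i, hi⟩ := hex
  by_cases h2 : ∃ j, j ≠ i ∧ 1 ≤ f j
  · obtain ⟨j, hji, hj⟩ := h2
    exact Or.inr ⟨i, j, Ne.symm hji, hi, hj⟩
  push_neg at h2
  have hs : ∑' j, (f j : ℝ≥0∞) = (f i : ℝ≥0∞) := by
    apply tsum_eq_single
    intro j hj
    have := h2 j hj
    simp [Nat.lt_one_iff.mp this]
  rw [hs] at h
  have h2i : 2 ≤ f i := by exact_mod_cast h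
  exact absurd h2i (by have := h1 i; omega)

lemma broadcast_upgrade (t k : ℕ) (ht : 2 ≤ t) (hk : 1 ≤ k) (T : Set (ℤ × ℤ))
    (hT : IsBroadcasting t 2 T) : IsBroadcasting (t + k) (2 + 2 * k) T := by
  intro v
  unfold signal
  set F : T → ℕ := fun w => t + k - gridDist (w : ℤ × ℤ) v with hF
  show ((2 + 2 * k : ℕ) : ℝ≥0∞) ≤ ∑' w : T, (F w : ℝ≥0∞)
  have h2 : (2 : ℝ≥0∞) ≤ ∑' w : T, ((t - gridDist (w : ℤ × ℤ) v : ℕ) : ℝ≥0∞) := by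
    have := hT v
    unfold signal at this
    simpa using this
  rcases two_le_tsum_cases _ h2 with ⟨w, hw⟩ | ⟨i, j, hij, hi, hj⟩
  · -- single tower contributing ≥ 2
    by_cases hbig : k + 2 ≤ t - gridDist (w : ℤ × ℤ) v
    · -- it alone suffices at strength t+k
      have hFw : 2 + 2 * k ≤ F w := by simp only [hF]; omega
      calc ((2 + 2 * k : ℕ) : ℝ≥0∞) ≤ (F w : ℝ≥0∞) := by exact_mod_cast hFw
        _ ≤ ∑' w : T, (F w : ℝ≥0∞) := ENNReal.le_tsum w
    · -- find a second tower via a shifted vertex u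
      push_neg at hbig
      set d := gridDist (w : ℤ × ℤ) v with hd
      have hd2 : d + 2 ≤ t := by omega
      set e : ℕ := t - 1 - d with he
      obtain ⟨u, hwu, huv⟩ : ∃ u : ℤ × ℤ,
          gridDist (w : ℤ × ℤ) u = t - 1 ∧ gridDist u v = e := by
        have hdd : ((w : ℤ × ℤ).1 - v.1).natAbs + ((w : ℤ × ℤ).2 - v.2).natAbs = d := rfl
        rcases le_total ((w : ℤ × ℤ)).1 v.1 with hc | hc
        · refine ⟨(v.1 + (e : ℤ), v.2), ?_, ?_⟩ <;> · unfold gridDist; simp only; omega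
        · refine ⟨(v.1 - (e : ℤ), v.2), ?_, ?_⟩ <;> · unfold gridDist; simp only; omega
      have h2u : (2 : ℝ≥0∞) ≤ ∑' x : T, ((t - gridDist (x : ℤ × ℤ) u : ℕ) : ℝ≥0∞) := by
        have := hT u
        unfold signal at this
        simpa using this
      -- extract a tower w' ≠ w within distance t-1 of u
      obtain ⟨w', hw'w, hw'u⟩ : ∃ w' : T, w' ≠ w ∧ gridDist (w' : ℤ × ℤ) u ≤ t - 1 := by
        rcases two_le_tsum_cases _ h2u with ⟨x, hx⟩ | ⟨x, y, hxy, hx, hy⟩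
        · refine ⟨x, ?_, by omega⟩
          intro hxw
          rw [hxw, hwu] at hx
          omega
        · rcases eq_or_ne x w with hxw | hxw
          · exact ⟨y, by rw [← hxw]; exact hxy.symm, by omega⟩
          · exact ⟨x, hxw, by omega⟩
      have hw'v : gridDist (w' : ℤ × ℤ) v ≤ (t - 1) + e :=
        le_trans (gridDist_triangle _ u v) (by rw [huv]; omega)
      have hsum : 2 + 2 * k ≤ F w + F w' := by
        simp only [hF]
        omega
      calc ((2 + 2 * k : ℕ) : ℝ≥0∞) ≤ ((F w + F w' : ℕ) : ℝ≥0∞) := by exact_mod_cast hsum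
        _ = (F w : ℝ≥0∞) + (F w' : ℝ≥0∞) := by push_cast; ring
        _ ≤ ∑' w : T, (F w : ℝ≥0∞) := pair_le_tsum _ (Ne.symm hw'w)
  · -- two towers each contributing ≥ 1
    have hsum : 2 + 2 * k ≤ F i + F j := by simp only [hF]; omega
    calc ((2 + 2 * k : ℕ) : ℝ≥0∞) ≤ ((F i + F j : ℕ) : ℝ≥0∞) := by exact_mod_cast hsum
      _ = (F i : ℝ≥0∞) + (F j : ℝ≥0∞) := by push_cast; ring
      _ ≤ ∑' w : T, (F w : ℝ≥0∞) := pair_le_tsum _ hij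

/-- For all `t ≥ 2` and `k ≥ 1`, `δ_{t,2}(ℤ²) ≥ δ_{t+k, 2+2k}(ℤ²)`. -/
theorem deltaGrid_t_two_ge (t k : ℕ) (ht : 2 ≤ t) (hk : 1 ≤ k) :
    deltaGrid (t + k) (2 + 2 * k) ≤ deltaGrid t 2 := by
  unfold deltaGrid
  exact le_iInf fun T => le_iInf fun hT =>
    iInf₂_le T (broadcast_upgrade t k ht hk T hT)
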